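/- arXiv:1401.1836 — 5 statements merged into one kernel-verified Lean document; each statement's English description precedes it below -/
import Mathlib

section
/- For every integer n ≥ 2, the polynomial p_n(x) = x^{2n} - 2(x + x^2 + ... + x^{2n-1}) + 1 has no root that is a root of unity. -/
open Polynomial Finset

/-!
If a primitive `k`-th root of unity is a root of `p n`, then `cyclotomic k ℤ`, its minimal
polynomial, divides `p n` in `ℤ[X]`, so `Φ_k(3)` divides `p n` evaluated at `3`, which is `4`.
For `k ≥ 3` this is impossible since `Φ_k(3) > 2 ^ φ(k) ≥ 4`; and `p n` does not vanish at `1`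
or `-1`, where it takes the values `4 - 4n` and `4`.
-/

noncomputable def p (n : ℕ) : ℤ[X] :=
  X ^ (2 * n) - 2 * ∑ j ∈ Icc 1 (2 * n - 1), X ^ j + 1

theorem aeval_p {R : Type*} [CommRing R] {n : ℕ} (hn : 1 ≤ n) (x : R) :
    aeval x (p n) = x ^ (2 * n) + 3 - 2 * ∑ j ∈ range (2 * n), x ^ j := by
  have hIcc : Icc 1 (2 * n - 1) = Ico 1 (2 * n) := by
    rw [← Ico_add_one_right_eq_Icc]; congr 1; omega
  rw [range_eq_Ico, sum_eq_sum_Ico_succ_bot (by omega), ← hIcc]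
  simp only [p, map_add, map_sub, map_mul, map_sum, map_pow, aeval_X, map_ofNat, map_one]
  ring

theorem aeval_p_one {R : Type*} [CommRing R] {n : ℕ} (hn : 1 ≤ n) :
    aeval (1 : R) (p n) = 4 - 4 * n := by
  rw [aeval_p hn]
  simp only [one_pow, sum_const, card_range, nsmul_eq_mul, mul_one]
  push_cast
  ring

theorem aeval_p_neg_one {R : Type*} [CommRing R] {n : ℕ} (hn : 1 ≤ n) :
    aeval (-1 : R) (p n) = 4 := by
  rw [aeval_p hn, neg_one_geom_sum, if_pos (even_two_mul n), (even_two_mul n).neg_one_pow]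
  norm_num

theorem eval_p_three {n : ℕ} (hn : 1 ≤ n) : (p n).eval 3 = 4 := by
  have h := aeval_p (R := ℤ) hn 3
  rw [aeval_def, eval₂_eq_eval_map, Algebra.algebraMap_self, Polynomial.map_id] at h
  rw [h]
  linear_combination -geom_sum_mul (3 : ℤ) (2 * n)

theorem cyclotomic_eval_dvd_eval_of_aeval_eq_zero {K : Type*} [Field K] [CharZero K] {ζ : K}
    {k : ℕ} (hζ : IsPrimitiveRoot ζ k) (hk : 0 < k) {f : ℤ[X]} (hf : aeval ζ f = 0) (a : ℤ) :
    (cyclotomic k ℤ).eval a ∣ f.eval a := by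
  rw [cyclotomic_eq_minpoly hζ hk]
  exact eval_dvd (minpoly.isIntegrallyClosed_dvd (hζ.isIntegral hk) hf)

theorem sub_one_sq_lt_cyclotomic_eval {k : ℕ} (hk : 3 ≤ k) {q : ℤ} (hq : 2 ≤ q) :
    (q - 1) ^ 2 < (cyclotomic k ℤ).eval q := by
  have htot : 2 ≤ k.totient := by
    obtain ⟨t, ht⟩ := Nat.totient_even (by omega : 2 < k)
    have hpos := Nat.totient_pos.2 (by omega : 0 < k)
    omega
  have hreal := sub_one_pow_totient_lt_cyclotomic_eval (by omega : 2 ≤ k)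
    (by exact_mod_cast hq : (1 : ℝ) < q)
  rw [← map_cyclotomic_int, eval_intCast_map, eq_intCast] at hreal
  have hpow : (q - 1) ^ 2 ≤ (q - 1) ^ k.totient := pow_le_pow_right₀ (by omega) htot
  exact_mod_cast hpow.trans_lt (by exact_mod_cast hreal)

theorem no_root_of_unity (n : ℕ) (hn : 2 ≤ n) (z : ℂ)
    (hz : ∃ m : ℕ, 0 < m ∧ z ^ m = 1) :
    aeval z ((X ^ (2 * n) - 2 * ∑ j ∈ Finset.Icc 1 (2 * n - 1), X ^ j + 1 : ℤ[X])) ≠ 0 := by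
  change aeval z (p n) ≠ 0
  intro h0
  obtain ⟨m, hm, hzm⟩ := hz
  have hk : 0 < orderOf z := orderOf_pos_iff.2 (isOfFinOrder_iff_pow_eq_one.2 ⟨m, hm, hzm⟩)
  have hprim : IsPrimitiveRoot z (orderOf z) := IsPrimitiveRoot.orderOf z
  have hk2 : orderOf z ≤ 2 := by
    by_contra! hk3
    have hdvd := cyclotomic_eval_dvd_eval_of_aeval_eq_zero hprim hk h0 3
    rw [eval_p_three (by omega)] at hdvd
    have hlower := sub_one_sq_lt_cyclotomic_eval hk3 (by norm_num : (2 : ℤ) ≤ 3)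
    have hupper := Int.le_of_dvd (by norm_num) hdvd
    omega
  interval_cases orderOf z
  · rw [IsPrimitiveRoot.one_right_iff.1 hprim, aeval_p_one (by omega), sub_eq_zero] at h0
    have hn1 : (1 : ℂ) = n := by linear_combination h0 / 4
    norm_cast at hn1
    omega
  · rw [hprim.eq_neg_one_of_two_right, aeval_p_neg_one (by omega)] at h0
    norm_num at h0
end

section
/- Fix integers k ≥ 3. For each g ≥ 2 let λ_g be the largest real root of q_{g,k}(x) = x^{2g+1} - (k-1)x^{2g} + (k-1)x - 1. Then λ_g → k - 1 as g → ∞. -/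
/-!
Write `q_n(x) = x^n (x - c) + (c x - 1)` with `c = k - 1 > 1` and `n = 2g`. For `x > c` both
summands are positive, so every root lies below `c`, while `q_n(c) = c² - 1 ≥ 0`. For any
`1 < b < c` the first summand at `b` tends to `-∞`, so eventually `q_n(b) ≤ 0` and the
intermediate value theorem gives a root in `[b, c]`. Hence the largest root is squeezed into
`[b, c]` for all large `g`.
-/

open Filter Set

namespace LargestRoot

noncomputable def q (c : ℝ) (n : ℕ) (x : ℝ) : ℝ := x ^ (n + 1) - c * x ^ n + c * x - 1

lemma q_eq (c : ℝ) (n : ℕ) (x : ℝ) : q c n x = x ^ n * (x - c) + (c * x - 1) := by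
  rw [q, pow_succ]; ring

lemma continuous_q (c : ℝ) (n : ℕ) : Continuous (q c n) := by
  unfold q; fun_prop

lemma q_self_nonneg {c : ℝ} (hc : 1 ≤ c) (n : ℕ) : 0 ≤ q c n c := by
  rw [q_eq, sub_self, mul_zero, zero_add]; nlinarith

lemma le_of_q_eq_zero {c x : ℝ} {n : ℕ} (hc : 1 ≤ c) (hx : q c n x = 0) : x ≤ c := by
  by_contra! hcx
  have hpos : 0 < x ^ n * (x - c) := mul_pos (pow_pos (by linarith) n) (sub_pos.2 hcx)
  rw [q_eq] at hx
  nlinarith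

lemma tendsto_q_atBot {b c : ℝ} (hb : 1 < b) (hbc : b < c) :
    Tendsto (fun n => q c n b) atTop atBot := by
  simp only [q_eq]
  exact tendsto_atBot_add_const_right _ _
    ((tendsto_pow_atTop_atTop_of_one_lt hb).atTop_mul_const_of_neg (sub_neg.2 hbc))

lemma eventually_exists_q_eq_zero_gt {a c : ℝ} (hc : 1 < c) (hac : a < c) :
    ∀ᶠ n in atTop, ∃ x, a < x ∧ q c n x = 0 := by
  obtain ⟨b, hab, hbc⟩ := exists_between (max_lt hac hc)
  filter_upwards [(tendsto_q_atBot ((le_max_right a 1).trans_lt hab) hbc).eventually_le_atBot 0]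
    with n hqb
  obtain ⟨x, hx, hqx⟩ := intermediate_value_Icc hbc.le (continuous_q c n).continuousOn
    ⟨hqb, q_self_nonneg hc.le n⟩
  exact ⟨x, (le_max_left a 1).trans_lt (hab.trans_le hx.1), hqx⟩

end LargestRoot

open LargestRoot

theorem largest_root_tendsto (k : ℕ) (hk : 3 ≤ k) (lam : ℕ → ℝ)
    (h : ∀ g : ℕ, 2 ≤ g →
      IsGreatest {x : ℝ | x ^ (2 * g + 1) - ((k : ℝ) - 1) * x ^ (2 * g) + ((k : ℝ) - 1) * x - 1 = 0}
        (lam g)) :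
    Filter.Tendsto lam Filter.atTop (nhds ((k : ℝ) - 1)) := by
  have hc : 1 < (k : ℝ) - 1 := by
    have : (3 : ℝ) ≤ k := by exact_mod_cast hk
    linarith
  have h2g : Tendsto (fun g : ℕ => 2 * g) atTop atTop :=
    tendsto_id.nsmul_atTop two_pos
  rw [tendsto_order]
  refine ⟨fun a ha => ?_, fun b hb => ?_⟩
  · filter_upwards [h2g.eventually (eventually_exists_q_eq_zero_gt hc ha), eventually_ge_atTop 2]
      with g ⟨x, hax, hx⟩ hg
    exact hax.trans_le ((h g hg).2 hx)
  · filter_upwards [eventually_ge_atTop 2] with g hg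
    exact (le_of_q_eq_zero hc.le (h g hg).1).trans_lt hb
end

section
/- For integers g ≥ 2, k ≥ 3, and any ε with 0 < ε < 1, there exists G such that for all g ≥ G, q_{g,k}(k-1-ε) < 0, where q_{g,k}(x) = x^{2g+1} - (k-1)x^{2g} + (k-1)x - 1. Consequently q_{g,k} has a real root in the interval (k-1-ε, k-1) for all sufficiently large g. -/
/-!
Write `a = k - 1`, `c = k - 1 - ε` and `q(x) = x ^ (n + 1) - a x ^ n + a x - 1 = x ^ n (x - a) + (a x - 1)`.
Since `1 < c < a`, the term `c ^ n (c - a)` tends to `-∞` and eventually beats the constant `a c - 1`,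
so `q(c) < 0` for large `n`; as `q(a) = a ^ 2 - 1 > 0`, the intermediate value theorem gives a root in `(c, a)`.
-/

open Filter Set

noncomputable section

def q (a : ℝ) (n : ℕ) (x : ℝ) : ℝ := x ^ (n + 1) - a * x ^ n + a * x - 1

lemma q_eq_mul_add (a : ℝ) (n : ℕ) (x : ℝ) : q a n x = x ^ n * (x - a) + (a * x - 1) := by
  rw [q, pow_succ]; ring

lemma q_self (a : ℝ) (n : ℕ) : q a n a = a ^ 2 - 1 := by
  rw [q_eq_mul_add]; ring

lemma eventually_q_neg {a c : ℝ} (hc : 1 < c) (hca : c < a) : ∀ᶠ n in atTop, q a n c < 0 := by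
  have hgrow : Tendsto (fun n : ℕ => c ^ n * (a - c)) atTop atTop :=
    (tendsto_pow_atTop_atTop_of_one_lt hc).atTop_mul_const (sub_pos.2 hca)
  filter_upwards [hgrow.eventually_gt_atTop (a * c - 1)] with n hn
  rw [q_eq_mul_add]
  linarith

lemma exists_q_root_of_neg {a c : ℝ} {n : ℕ} (ha : 1 < a) (hca : c ≤ a) (hneg : q a n c < 0) :
    ∃ x, c < x ∧ x < a ∧ q a n x = 0 := by
  have hpos : 0 < q a n a := by rw [q_self]; nlinarith
  have hcont : ContinuousOn (q a n) (Icc c a) := by unfold q; fun_prop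
  obtain ⟨x, ⟨hcx, hxa⟩, hx⟩ := intermediate_value_Ioo hca hcont ⟨hneg, hpos⟩
  exact ⟨x, hcx, hxa, hx⟩

end

theorem q_eventually_neg (k : ℕ) (hk : 3 ≤ k) (ε : ℝ) (hε : 0 < ε) (hε1 : ε < 1) :
    ∃ G : ℕ, ∀ g : ℕ, G ≤ g → 2 ≤ g →
      (((k : ℝ) - 1 - ε) ^ (2 * g + 1) - ((k : ℝ) - 1) * ((k : ℝ) - 1 - ε) ^ (2 * g)
          + ((k : ℝ) - 1) * ((k : ℝ) - 1 - ε) - 1 < 0) ∧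
        ∃ x : ℝ, (k : ℝ) - 1 - ε < x ∧ x < (k : ℝ) - 1 ∧
          x ^ (2 * g + 1) - ((k : ℝ) - 1) * x ^ (2 * g) + ((k : ℝ) - 1) * x - 1 = 0 := by
  have hk3 : (3 : ℝ) ≤ k := by exact_mod_cast hk
  have hc : 1 < (k : ℝ) - 1 - ε := by linarith
  have hca : (k : ℝ) - 1 - ε < k - 1 := by linarith
  obtain ⟨G, hG⟩ := eventually_atTop.1 (eventually_q_neg hc hca)
  refine ⟨G, fun g hg _ => ?_⟩
  have hneg : q (k - 1) (2 * g) (k - 1 - ε) < 0 := hG (2 * g) (by omega)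
  exact ⟨hneg, exists_q_root_of_neg (by linarith) hca.le hneg⟩
end

section
/- Let p(x) be an irreducible monic integer polynomial of degree 3 with roots λ₁, λ₂, λ₃ (in ℂ), λ₁ real with λ₁ > 1, |λ₂| ≤ |λ₁|, |λ₃| ≤ |λ₁|, and constant term ±1 (i.e., |λ₁λ₂λ₃| = 1). Suppose further that λ₁ is strictly larger in absolute value than every root of p(x)·p*(x) other than λ₁ itself, where p*(x) = x³p(1/x). Then |λ₂| < 1 and |λ₃| < 1, i.e., λ₁ is a Pisot number. -/
open Polynomial

lemma pisot_aux (p : ℤ[X]) (hmonic : p.Monic) (hdeg : p.natDegree = 3)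
    (hirr : Irreducible p) (l₁ l₂ l₃ : ℂ)
    (hfac : p.map (Int.castRingHom ℂ) = (X - C l₁) * (X - C l₂) * (X - C l₃))
    (hreal : l₁.im = 0) (hgt : 1 < l₁.re)
    (hconst : ‖l₁ * l₂ * l₃‖ = 1)
    (hmax : ∀ z : ℂ, aeval z (p * p.reverse) = 0 → z ≠ l₁ → ‖z‖ < ‖l₁‖) :
    ‖l₂‖ < 1 := by
  have habs1 : ‖l₁‖ = l₁.re := by
    have h : l₁ = (l₁.re : ℂ) := Complex.ext (by simp) (by simp [hreal])
    rw [h, Complex.norm_real, Real.norm_eq_abs, abs_of_pos (by simpa using by linarith)]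
    simp
  have hl1 : 1 < ‖l₁‖ := by rw [habs1]; exact hgt
  have h10 : l₁ ≠ 0 := by
    intro h; rw [h] at hconst; simp at hconst
  have h30 : l₃ ≠ 0 := by
    intro h; rw [h] at hconst; simp at hconst
  by_contra hcon
  push_neg at hcon
  have hprod : ‖l₁‖ * ‖l₂‖ * ‖l₃‖ = 1 := by
    rw [← norm_mul, ← norm_mul]; exact hconst
  have h3ne : ‖l₃‖ ≠ 0 := norm_ne_zero_iff.mpr h30
  have hinv3 : ‖l₃⁻¹‖ = ‖l₁‖ * ‖l₂‖ := by
    rw [norm_inv]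
    field_simp
    linarith [hprod]
  have hge : ‖l₁‖ ≤ ‖l₃⁻¹‖ := by
    rw [hinv3]
    nlinarith [norm_pos_iff.mpr h10]
  have hroot3' : aeval l₃ p = 0 := by
    rw [aeval_def, eval₂_eq_eval_map, algebraMap_int_eq, hfac]; simp
  have hrev : aeval l₃⁻¹ p.reverse = 0 := by
    have := invertibleOfNonzero h30
    have h2 := (eval₂_reverse_eq_zero_iff (Int.castRingHom ℂ) l₃ p).mpr
      (by rwa [aeval_def, algebraMap_int_eq] at hroot3')
    rw [invOf_eq_inv] at h2
    rwa [aeval_def, algebraMap_int_eq]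
  have hrootpp : aeval l₃⁻¹ (p * p.reverse) = 0 := by
    rw [map_mul, hrev, mul_zero]
  have heq : l₃⁻¹ = l₁ := by
    by_contra hne
    exact absurd (hmax _ hrootpp hne) (not_lt.mpr hge)
  have hl13 : l₁ * l₃ = 1 := by
    rw [← heq]; field_simp
  have hc0 : (p.coeff 0 : ℂ) = -(l₁ * l₂ * l₃) := by
    have h := congrArg (fun q => coeff q 0) hfac
    simp only [coeff_map, eq_intCast] at h
    rw [h]
    simp [coeff_zero_eq_eval_zero]
  have hl2 : l₂ = -(p.coeff 0 : ℂ) := by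
    rw [hc0, neg_neg]
    linear_combination (-l₂) * hl13
  have habsc : ‖(p.coeff 0 : ℂ)‖ = 1 := by rw [hc0]; simpa using hconst
  have hcint : p.coeff 0 = 1 ∨ p.coeff 0 = -1 := by
    have h : |(p.coeff 0 : ℝ)| = 1 := by
      rw [← Real.norm_eq_abs, ← Complex.norm_real]
      simpa using habsc
    rcases (abs_eq (by norm_num : (0:ℝ) ≤ 1)).mp h with h | h
    · left; exact_mod_cast h
    · right; exact_mod_cast h
  set n : ℤ := -(p.coeff 0) with hn
  have hl2n : l₂ = (n : ℂ) := by rw [hl2, hn]; push_cast; ring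
  have hroot2 : eval₂ (Int.castRingHom ℂ) ((Int.castRingHom ℂ) n) p = 0 := by
    have : aeval l₂ p = 0 := by
      rw [aeval_def, eval₂_eq_eval_map, algebraMap_int_eq, hfac]; simp
    rw [aeval_def, algebraMap_int_eq, hl2n] at this
    simpa using this
  have hrootn : p.IsRoot n := by
    have h0 : (Int.castRingHom ℂ) (p.eval n) = 0 := by
      rw [← eval₂_at_apply]; exact hroot2
    exact (RingHom.injective_int (Int.castRingHom ℂ)) (by simpa using h0)
  have hdvd : X - C n ∣ p := dvd_iff_isRoot.mpr hrootn
  obtain ⟨q, hq⟩ := hdvd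
  rcases hirr.isUnit_or_isUnit hq with hu | hu
  · exact Polynomial.not_isUnit_X_sub_C n hu
  · have hq0 : q ≠ 0 := by
      intro h; rw [h, mul_zero] at hq; exact hmonic.ne_zero hq
    have : p.natDegree = 1 := by
      rw [hq, natDegree_mul (X_sub_C_ne_zero n) hq0, natDegree_X_sub_C,
        natDegree_eq_zero_of_isUnit hu]
    omega

theorem degree_three_pisot (p : ℤ[X]) (hmonic : p.Monic) (hdeg : p.natDegree = 3)
    (hirr : Irreducible p) (l₁ l₂ l₃ : ℂ)
    (hfac : p.map (Int.castRingHom ℂ) = (X - C l₁) * (X - C l₂) * (X - C l₃))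
    (hreal : l₁.im = 0) (hgt : 1 < l₁.re)
    (h2 : ‖l₂‖ ≤ ‖l₁‖) (h3 : ‖l₃‖ ≤ ‖l₁‖)
    (hconst : ‖l₁ * l₂ * l₃‖ = 1)
    (hmax : ∀ z : ℂ, aeval z (p * p.reverse) = 0 → z ≠ l₁ → ‖z‖ < ‖l₁‖) :
    ‖l₂‖ < 1 ∧ ‖l₃‖ < 1 := by
  constructor
  · exact pisot_aux p hmonic hdeg hirr l₁ l₂ l₃ hfac hreal hgt hconst hmax
  · exact pisot_aux p hmonic hdeg hirr l₁ l₃ l₂ (by rw [hfac]; ring)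
      hreal hgt (by rw [← hconst]; ring_nf) hmax
end

section
/- For every integer m ≥ 6 there is no real number φ with 0 < φ < π/2 of the form φ = jπ/m for a positive integer j such that sin(φ + 2π/m) = 3·sin(φ). -/
/-! With θ = π/m and φ = jθ, subadditivity of sin on [0, π] gives
sin(φ + 2θ) ≤ sin φ + sin 2θ, and sin 2θ = 2 sin θ cos θ < 2 sin θ ≤ 2 sin φ
because θ ≤ φ < π/2. Hence sin(φ + 2θ) < 3 sin φ. -/

open Real

namespace Real

theorem sin_add_le_sin_add_sin {x y : ℝ} (hx : 0 ≤ sin x) (hy : 0 ≤ sin y) :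
    sin (x + y) ≤ sin x + sin y := by
  rw [sin_add]
  nlinarith [cos_le_one x, cos_le_one y]

theorem sin_two_mul_lt_two_mul_sin {θ : ℝ} (h0 : 0 < θ) (hπ : θ < π) :
    sin (2 * θ) < 2 * sin θ := by
  have hsin : 0 < sin θ := sin_pos_of_pos_of_lt_pi h0 hπ
  have hcos : cos θ < 1 := cos_zero ▸ cos_lt_cos_of_nonneg_of_le_pi le_rfl hπ.le h0
  rw [sin_two_mul]
  nlinarith

theorem sin_add_two_mul_lt_three_mul_sin {θ φ : ℝ} (hθ : 0 < θ) (hθφ : θ ≤ φ)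
    (hφ : φ < π / 2) : sin (φ + 2 * θ) < 3 * sin φ := by
  have hφ_nonneg : 0 ≤ sin φ := sin_nonneg_of_nonneg_of_le_pi (by linarith) (by linarith)
  have h2θ_nonneg : 0 ≤ sin (2 * θ) := sin_nonneg_of_nonneg_of_le_pi (by linarith) (by linarith)
  calc sin (φ + 2 * θ) ≤ sin φ + sin (2 * θ) := sin_add_le_sin_add_sin hφ_nonneg h2θ_nonneg
    _ < sin φ + 2 * sin θ := by gcongr; exact sin_two_mul_lt_two_mul_sin hθ (by linarith)
    _ ≤ sin φ + 2 * sin φ := by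
      gcongr; exact sin_le_sin_of_le_of_le_pi_div_two (by linarith) hφ.le hθφ
    _ = 3 * sin φ := by ring

end Real

theorem no_sin_solution (m : ℕ) (hm : 6 ≤ m) (j : ℕ) (hj : 0 < j)
    (hlt : (j : ℝ) * π / m < π / 2) :
    Real.sin ((j : ℝ) * π / m + 2 * π / m) ≠ 3 * Real.sin ((j : ℝ) * π / m) := by
  have hθ : 0 < π / m := div_pos pi_pos (by exact_mod_cast (by omega : 0 < m))
  have hθφ : π / m ≤ (j : ℝ) * π / m := by
    rw [mul_div_assoc]
    exact le_mul_of_one_le_left hθ.le (by exact_mod_cast hj)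
  rw [mul_div_assoc 2]
  exact (sin_add_two_mul_lt_three_mul_sin hθ hθφ hlt).ne
end
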